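/- arXiv:2410.14120 — 3 statements merged into one kernel-verified Lean document; each statement's English description precedes it below -/
import Mathlib

section
/- Fourth-moment bound for factor-model quadratic forms (Lemma 2.2, same-covariance case, with Δ ≥ 0): let Γ be a real p×m matrix, X = Γ Z, Σ = Γ Γᵀ, and let M be any symmetric positive semidefinite real p×p matrix. Then E[(Xᵀ M X)²] ≤ (tr(MΣ))² + (2 + Δ) tr(MΣMΣ). In particular, taking M = W^{1/2} Σ_α W^{1/2} yields E[(Yᵀ W^{1/2} Σ_α W^{1/2} Y)²] ≤ (tr(WΣ_α WΣ))² + (2+Δ) tr((WΣ_α WΣ)²) for Y = W^{1/2} X. -/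
/-!
With `A = Γᵀ M Γ` the quadratic form is `Xᵀ M X = Zᵀ A Z`. Factorization of the mixed moments
of order at most four, together with `E z = 0`, `E z² = 1`, `E z⁴ = 3 + Δ`, gives
`E[z_a z_b z_c z_d] = δ_ab δ_cd + δ_ac δ_bd + δ_ad δ_bc + Δ δ_abcd`, hence
`E[(Zᵀ A Z)²] = (tr A)² + tr(A Aᵀ) + tr(A²) + Δ ∑ A_ii²`. For symmetric `A` the last three terms
are at most `(2 + Δ) tr(A²)` because `∑ A_ii² ≤ ∑ A_ij² = tr(A²)` and `Δ ≥ 0`; finally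
`tr A = tr(M Σ)` and `tr(A²) = tr(M Σ M Σ)`. In the second statement `W^{1/2}` is symmetric with
square `W`, so `Yᵀ W^{1/2} Σ_α W^{1/2} Y = Xᵀ (W Σ_α W) X` and the first statement applies.
-/

open MeasureTheory Matrix

open scoped ComplexOrder in
/-- The square root of a positive semidefinite matrix, with the definition that Mathlib
(December 2024) gave to `Matrix.PosSemidef.sqrt` (since removed from Mathlib). -/
noncomputable def Matrix.PosSemidef.sqrt {n 𝕜 : Type*} [Fintype n] [RCLike 𝕜] [DecidableEq n]
    {A : Matrix n n 𝕜} (hA : A.PosSemidef) : Matrix n n 𝕜 :=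
  hA.1.eigenvectorUnitary.1 * diagonal ((↑) ∘ (√·) ∘ hA.1.eigenvalues) *
    (star hA.1.eigenvectorUnitary : Matrix n n 𝕜)

namespace Matrix.PosSemidef

open scoped ComplexOrder

variable {n 𝕜 : Type*} [Fintype n] [RCLike 𝕜] [DecidableEq n] {A : Matrix n n 𝕜}

theorem isHermitian_sqrt (hA : A.PosSemidef) : hA.sqrt.IsHermitian := by
  unfold IsHermitian sqrt
  rw [conjTranspose_mul, conjTranspose_mul, diagonal_conjTranspose,
    ← star_eq_conjTranspose, ← star_eq_conjTranspose, star_star, Matrix.mul_assoc]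
  congr 3
  ext i
  simp

theorem sqrt_mul_sqrt (hA : A.PosSemidef) : hA.sqrt * hA.sqrt = A := by
  set U : Matrix n n 𝕜 := hA.1.eigenvectorUnitary.1
  set D : Matrix n n 𝕜 := diagonal ((↑) ∘ (√·) ∘ hA.1.eigenvalues)
  have hU : (star hA.1.eigenvectorUnitary : Matrix n n 𝕜) * U = 1 := Unitary.coe_star_mul_self _
  have hD : D * D = diagonal (RCLike.ofReal ∘ hA.1.eigenvalues) := by
    rw [diagonal_mul_diagonal]
    congr 1
    funext i
    simp [← RCLike.ofReal_mul, Real.mul_self_sqrt (hA.eigenvalues_nonneg i)]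
  conv_rhs => rw [hA.1.spectral_theorem, Unitary.conjStarAlgAut_apply]
  calc hA.sqrt * hA.sqrt
      = U * (D * ((star hA.1.eigenvectorUnitary : Matrix n n 𝕜) * U) * D) *
          (star hA.1.eigenvectorUnitary : Matrix n n 𝕜) := by
        simp only [sqrt, Matrix.mul_assoc]; rfl
    _ = _ := by rw [hU, Matrix.mul_one, hD]

end Matrix.PosSemidef

theorem Matrix.sum_diag_sq_le_trace_mul_transpose {n : Type*} [Fintype n] (A : Matrix n n ℝ) :
    ∑ i, A i i ^ 2 ≤ (A * Aᵀ).trace := by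
  simp only [trace, diag, mul_apply, transpose_apply, ← sq]
  exact Finset.sum_le_sum fun i _ =>
    Finset.single_le_sum (f := fun j => A i j ^ 2) (fun j _ => sq_nonneg _) (Finset.mem_univ i)

theorem Matrix.mulVec_dotProduct_mulVec_mulVec {m n : Type*} [Fintype m] [Fintype n]
    (B : Matrix m n ℝ) (N : Matrix m m ℝ) (x : n → ℝ) :
    B *ᵥ x ⬝ᵥ N *ᵥ (B *ᵥ x) = x ⬝ᵥ (Bᵀ * N * B) *ᵥ x := by
  rw [mulVec_mulVec, dotProduct_mulVec, ← vecMul_transpose, vecMul_vecMul, ← dotProduct_mulVec,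
    Matrix.mul_assoc]

section Moments

variable {Ω ι : Type*} [MeasurableSpace Ω] {P : Measure Ω} {Z : Ω → ι → ℝ}

def MixedMomentsFactorize (P : Measure Ω) (Z : Ω → ι → ℝ) (n : ℕ) : Prop :=
  ∀ (r : ℕ) (s : Fin r → ι), Function.Injective s →
    ∀ ς : Fin r → ℕ, (∀ t, 1 ≤ ς t) → (∑ t, ς t) ≤ n →
      (∫ ω, ∏ t, (Z ω (s t)) ^ (ς t) ∂P) = ∏ t, ∫ ω, (Z ω (s t)) ^ (ς t) ∂P

theorem integrable_mul_mul_mul (hZ : ∀ s, MemLp (fun ω => Z ω s) 4 P) (a b c d : ι) :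
    Integrable (fun ω => Z ω a * Z ω b * Z ω c * Z ω d) P := by
  have h := MemLp.prod' (s := Finset.univ) (f := fun t ω => Z ω (![a, b, c, d] t))
    (p := fun _ => 4) fun t _ => hZ _
  simpa [Fin.prod_univ_four, ENNReal.mul_inv_cancel, memLp_one_iff_integrable] using h

namespace MixedMomentsFactorize

theorem integral_prod_pow {n : ℕ} (h : MixedMomentsFactorize P Z n)
    (S : Finset ι) (k : ι → ℕ) (hk : ∀ i ∈ S, 1 ≤ k i) (hS : ∑ i ∈ S, k i ≤ n) :
    ∫ ω, ∏ i ∈ S, Z ω i ^ k i ∂P = ∏ i ∈ S, ∫ ω, Z ω i ^ k i ∂P := by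
  let e := S.equivFin.symm
  have hreindex : ∀ g : ι → ℝ, ∏ i ∈ S, g i = ∏ t, g (e t) := fun g => by
    rw [← Finset.prod_coe_sort, ← e.prod_comp]
  simp only [hreindex]
  refine h _ (fun t => e t) (Subtype.val_injective.comp e.injective) _ (fun t => hk _ (e t).2) ?_
  rwa [e.sum_comp (fun i : S => k i), Finset.sum_coe_sort]

theorem integral_multiset_prod [DecidableEq ι] {n : ℕ} (h : MixedMomentsFactorize P Z n)
    (s : Multiset ι) (hs : Multiset.card s ≤ n) :
    ∫ ω, (s.map (Z ω)).prod ∂P = ∏ i ∈ s.toFinset, ∫ ω, Z ω i ^ s.count i ∂P := by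
  simp only [Finset.prod_multiset_map_count]
  exact h.integral_prod_pow _ _ (fun i hi => Multiset.count_pos.2 (Multiset.mem_toFinset.1 hi))
    (by rwa [Multiset.toFinset_sum_count_eq])

theorem integral_mul_mul_mul [DecidableEq ι] (h : MixedMomentsFactorize P Z 4) {Δ : ℝ}
    (hmean : ∀ s, ∫ ω, Z ω s ∂P = 0) (hvar : ∀ s, ∫ ω, Z ω s ^ 2 ∂P = 1)
    (hkurt : ∀ s, ∫ ω, Z ω s ^ 4 ∂P = 3 + Δ) (a b c d : ι) :
    ∫ ω, Z ω a * Z ω b * Z ω c * Z ω d ∂P =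
      (if a = b then 1 else 0) * (if c = d then 1 else 0)
      + (if a = c then 1 else 0) * (if b = d then 1 else 0)
      + (if a = d then 1 else 0) * (if b = c then 1 else 0)
      + (if a = b ∧ b = c ∧ c = d then Δ else 0) := by
  have hprod := h.integral_multiset_prod {a, b, c, d} (by simp)
  simp only [Multiset.insert_eq_cons, Multiset.map_cons, Multiset.prod_cons,
    Multiset.map_singleton, Multiset.prod_singleton, ← mul_assoc] at hprod
  rw [hprod]
  -- `eq_comm` on `ι` puts every index equation into one orientation, so that the case
  -- hypotheses decide the conditions produced by `Multiset.count_cons` and `Finset.prod_insert`.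
  by_cases hab : a = b <;> by_cases hac : a = c <;> by_cases had : a = d <;>
    by_cases hbc : b = c <;> by_cases hbd : b = d <;> by_cases hcd : c = d <;>
    simp_all [Multiset.toFinset_cons, Multiset.count_cons, Finset.prod_insert, @eq_comm ι,
      one_add_one_eq_two, two_add_one_eq_three]

theorem integral_dotProduct_mulVec_sq [Fintype ι] [DecidableEq ι]
    (h : MixedMomentsFactorize P Z 4) {Δ : ℝ} (hZ : ∀ s, MemLp (fun ω => Z ω s) 4 P)
    (hmean : ∀ s, ∫ ω, Z ω s ∂P = 0) (hvar : ∀ s, ∫ ω, Z ω s ^ 2 ∂P = 1)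
    (hkurt : ∀ s, ∫ ω, Z ω s ^ 4 ∂P = 3 + Δ) (A : Matrix ι ι ℝ) :
    ∫ ω, (Z ω ⬝ᵥ A *ᵥ Z ω) ^ 2 ∂P =
      A.trace ^ 2 + (A * Aᵀ).trace + (A * A).trace + Δ * ∑ i, A i i ^ 2 := by
  have hquad : ∀ z : ι → ℝ, z ⬝ᵥ A *ᵥ z = ∑ i, ∑ j, A i j * (z i * z j) := fun z => by
    simp only [dotProduct, mulVec, Finset.mul_sum]
    exact Finset.sum_congr rfl fun i _ => Finset.sum_congr rfl fun j _ => by ring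
  have hexpand : ∀ z : ι → ℝ, (z ⬝ᵥ A *ᵥ z) ^ 2 =
      ∑ i, ∑ j, ∑ k, ∑ l, A i j * A k l * (z i * z j * z k * z l) := fun z => by
    rw [hquad, sq]
    simp only [Finset.sum_mul_sum]
    refine Finset.sum_congr rfl fun i _ => ?_
    rw [Finset.sum_comm]
    exact Finset.sum_congr rfl fun j _ => Finset.sum_congr rfl fun k _ =>
      Finset.sum_congr rfl fun l _ => by ring
  have hint : ∀ i j k l,
      Integrable (fun ω => A i j * A k l * (Z ω i * Z ω j * Z ω k * Z ω l)) P :=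
    fun i j k l => (integrable_mul_mul_mul hZ i j k l).const_mul _
  simp (disch := intro _ _; fun_prop) only [hexpand, integral_finsetSum, integral_const_mul,
    h.integral_mul_mul_mul hmean hvar hkurt]
  simp only [trace, diag, mul_apply, transpose_apply, mul_add, Finset.sum_add_distrib,
    mul_ite, mul_one, mul_zero, ite_and, Finset.sum_ite_eq, Finset.mem_univ, if_true,
    Finset.sum_ite_irrel, Finset.sum_const_zero]
  rw [← Finset.sum_mul_sum, ← Finset.sum_mul]
  simp only [sq]
  ring

theorem integral_dotProduct_mulVec_sq_le [Fintype ι] [DecidableEq ι]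
    (h : MixedMomentsFactorize P Z 4) {Δ : ℝ} (hΔ : 0 ≤ Δ)
    (hZ : ∀ s, MemLp (fun ω => Z ω s) 4 P)
    (hmean : ∀ s, ∫ ω, Z ω s ∂P = 0) (hvar : ∀ s, ∫ ω, Z ω s ^ 2 ∂P = 1)
    (hkurt : ∀ s, ∫ ω, Z ω s ^ 4 ∂P = 3 + Δ) {A : Matrix ι ι ℝ} (hA : A.IsSymm) :
    ∫ ω, (Z ω ⬝ᵥ A *ᵥ Z ω) ^ 2 ∂P ≤ A.trace ^ 2 + (2 + Δ) * (A * A).trace := by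
  have hdiag := A.sum_diag_sq_le_trace_mul_transpose
  rw [h.integral_dotProduct_mulVec_sq hZ hmean hvar hkurt, hA.eq]
  rw [hA.eq] at hdiag
  linarith [mul_le_mul_of_nonneg_left hdiag hΔ]

theorem integral_mulVec_dotProduct_mulVec_sq_le [Fintype ι] [DecidableEq ι] {κ : Type*}
    [Fintype κ] (h : MixedMomentsFactorize P Z 4) {Δ : ℝ} (hΔ : 0 ≤ Δ)
    (hZ : ∀ s, MemLp (fun ω => Z ω s) 4 P)
    (hmean : ∀ s, ∫ ω, Z ω s ∂P = 0) (hvar : ∀ s, ∫ ω, Z ω s ^ 2 ∂P = 1)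
    (hkurt : ∀ s, ∫ ω, Z ω s ^ 4 ∂P = 3 + Δ) (Γ : Matrix κ ι ℝ) {M : Matrix κ κ ℝ}
    (hM : M.IsSymm) :
    ∫ ω, (Γ *ᵥ Z ω ⬝ᵥ M *ᵥ (Γ *ᵥ Z ω)) ^ 2 ∂P ≤
      (M * (Γ * Γᵀ)).trace ^ 2 + (2 + Δ) * (M * (Γ * Γᵀ) * M * (Γ * Γᵀ)).trace := by
  have hA : (Γᵀ * M * Γ).IsSymm := by
    simp only [IsSymm, transpose_mul, transpose_transpose, hM.eq, Matrix.mul_assoc]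
  have htrace : (Γᵀ * M * Γ).trace = (M * (Γ * Γᵀ)).trace := by
    rw [trace_mul_comm, ← Matrix.mul_assoc, trace_mul_comm]
  have htrace_sq : (Γᵀ * M * Γ * (Γᵀ * M * Γ)).trace = (M * (Γ * Γᵀ) * M * (Γ * Γᵀ)).trace := by
    simp only [Matrix.mul_assoc]
    rw [trace_mul_comm]
    simp only [Matrix.mul_assoc]
  simp only [mulVec_dotProduct_mulVec_mulVec, ← htrace, ← htrace_sq]
  exact h.integral_dotProduct_mulVec_sq_le hΔ hZ hmean hvar hkurt hA

end MixedMomentsFactorize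

end Moments

theorem stmt_11_general {Ω : Type*} [MeasurableSpace Ω] (P : Measure Ω)
    (p m : ℕ) (Δ : ℝ) (hΔ : 0 ≤ Δ)
    (Z : Ω → Fin m → ℝ)
    (hL4 : ∀ s, MemLp (fun ω => Z ω s) 4 P)
    (hmean : ∀ s, (∫ ω, Z ω s ∂P) = 0)
    (hvar : ∀ s, (∫ ω, (Z ω s) ^ 2 ∂P) = 1)
    (hkurt : ∀ s, (∫ ω, (Z ω s) ^ 4 ∂P) = 3 + Δ)
    (hfac : ∀ (r : ℕ) (s : Fin r → Fin m), Function.Injective s →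
        ∀ ς : Fin r → ℕ, (∀ t, 1 ≤ ς t) → (∑ t, ς t) ≤ 4 →
        (∫ ω, ∏ t, (Z ω (s t)) ^ (ς t) ∂P) = ∏ t, ∫ ω, (Z ω (s t)) ^ (ς t) ∂P)
    (Γ : Matrix (Fin p) (Fin m) ℝ)
    (Sig : Matrix (Fin p) (Fin p) ℝ) (hSig : Sig = Γ * Γᵀ)
    (M : Matrix (Fin p) (Fin p) ℝ) (hM : M.PosSemidef) :
    (∫ ω, (Γ.mulVec (Z ω) ⬝ᵥ M.mulVec (Γ.mulVec (Z ω))) ^ 2 ∂P) ≤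
        (Matrix.trace (M * Sig)) ^ 2 + (2 + Δ) * Matrix.trace (M * Sig * M * Sig) ∧
    (∀ (W Sa : Matrix (Fin p) (Fin p) ℝ) (hW : W.PosSemidef), Sa.PosSemidef →
      M = hW.sqrt * Sa * hW.sqrt →
      (∫ ω, (hW.sqrt.mulVec (Γ.mulVec (Z ω)) ⬝ᵥ
          (hW.sqrt * Sa * hW.sqrt).mulVec (hW.sqrt.mulVec (Γ.mulVec (Z ω)))) ^ 2 ∂P) ≤
        (Matrix.trace (W * Sa * W * Sig)) ^ 2 +
          (2 + Δ) * Matrix.trace (W * Sa * W * Sig * (W * Sa * W * Sig))) := by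
  subst hSig
  have hmom : MixedMomentsFactorize P Z 4 := hfac
  have isSymm {A : Matrix (Fin p) (Fin p) ℝ} (hA : A.PosSemidef) : A.IsSymm :=
    isHermitian_iff_isSymm.1 hA.1
  refine ⟨hmom.integral_mulVec_dotProduct_mulVec_sq_le hΔ hL4 hmean hvar hkurt Γ (isSymm hM),
    fun W Sa hW hSa _ => ?_⟩
  have hS : hW.sqrt.IsSymm := isHermitian_iff_isSymm.1 hW.isHermitian_sqrt
  have hsandwich : hW.sqrtᵀ * (hW.sqrt * Sa * hW.sqrt) * hW.sqrt = W * Sa * W := by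
    rw [hS.eq]
    conv_rhs => rw [← hW.sqrt_mul_sqrt]
    simp only [Matrix.mul_assoc]
  have hWSaW : (W * Sa * W).IsSymm := by
    simp only [IsSymm, transpose_mul, (isSymm hW).eq, (isSymm hSa).eq, Matrix.mul_assoc]
  simp only [mulVec_dotProduct_mulVec_mulVec hW.sqrt, hsandwich]
  simpa only [Matrix.mul_assoc] using
    hmom.integral_mulVec_dotProduct_mulVec_sq_le hΔ hL4 hmean hvar hkurt Γ hWSaW

/-- **Fourth-moment bound for factor-model quadratic forms (Lemma 2.2, same-covariance
case, `Δ ≥ 0`).** With `X = Γ Z`, `Σ = Γ Γᵀ` and `M` symmetric positive semidefinite,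
`E[(Xᵀ M X)²] ≤ (tr(MΣ))² + (2 + Δ) tr(MΣMΣ)`; in particular, for `M = W^{1/2} Σ_α W^{1/2}`
and `Y = W^{1/2} X`, `E[(Yᵀ W^{1/2} Σ_α W^{1/2} Y)²] ≤ (tr(WΣ_α WΣ))² + (2+Δ) tr((WΣ_α WΣ)²)`. -/
theorem stmt_11 {Ω : Type*} [MeasurableSpace Ω] (P : Measure Ω) [IsProbabilityMeasure P]
    (p m : ℕ) (Δ : ℝ) (hΔ : 0 ≤ Δ)
    (Z : Ω → Fin m → ℝ) (hmeas : Measurable Z)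
    (hL4 : ∀ s, MemLp (fun ω => Z ω s) 4 P)
    (hmean : ∀ s, (∫ ω, Z ω s ∂P) = 0)
    (hvar : ∀ s, (∫ ω, (Z ω s) ^ 2 ∂P) = 1)
    (hkurt : ∀ s, (∫ ω, (Z ω s) ^ 4 ∂P) = 3 + Δ)
    (hfac : ∀ (r : ℕ) (s : Fin r → Fin m), Function.Injective s →
        ∀ ς : Fin r → ℕ, (∀ t, 1 ≤ ς t) → (∑ t, ς t) ≤ 4 →
        (∫ ω, ∏ t, (Z ω (s t)) ^ (ς t) ∂P) = ∏ t, ∫ ω, (Z ω (s t)) ^ (ς t) ∂P)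
    (Γ : Matrix (Fin p) (Fin m) ℝ)
    (Sig : Matrix (Fin p) (Fin p) ℝ) (hSig : Sig = Γ * Γᵀ)
    (M : Matrix (Fin p) (Fin p) ℝ) (hM : M.PosSemidef) :
    (∫ ω, (Γ.mulVec (Z ω) ⬝ᵥ M.mulVec (Γ.mulVec (Z ω))) ^ 2 ∂P) ≤
        (Matrix.trace (M * Sig)) ^ 2 + (2 + Δ) * Matrix.trace (M * Sig * M * Sig) ∧
    (∀ (W Sa : Matrix (Fin p) (Fin p) ℝ) (hW : W.PosSemidef), Sa.PosSemidef →
      M = hW.sqrt * Sa * hW.sqrt →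
      (∫ ω, (hW.sqrt.mulVec (Γ.mulVec (Z ω)) ⬝ᵥ
          (hW.sqrt * Sa * hW.sqrt).mulVec (hW.sqrt.mulVec (Γ.mulVec (Z ω)))) ^ 2 ∂P) ≤
        (Matrix.trace (W * Sa * W * Sig)) ^ 2 +
          (2 + Δ) * Matrix.trace (W * Sa * W * Sig * (W * Sa * W * Sig))) :=
  stmt_11_general P p m Δ hΔ Z hL4 hmean hvar hkurt hfac Γ Sig hSig M hM
end

section
/- Lemma 2.3 (with Δ ≥ 0): let X = Γ_α Z and X' = Γ_β Z' be independent, where Γ_α is a real p×m matrix, Γ_β is a real p×m' matrix, Σ_α = Γ_α Γ_αᵀ and Σ_β = Γ_β Γ_βᵀ. Then for any symmetric positive semidefinite real p×p matrix W, E[(Xᵀ W X')⁴] ≤ (3 + Δ) (tr(WΣ_α W Σ_β))² + (3 + Δ)(2 + Δ) tr((WΣ_α W Σ_β)²). -/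
open MeasureTheory ProbabilityTheory Matrix

/-!
With `A = Γ_αᵀ W Γ_β` the form is `Xᵀ W X' = Zᵀ A Z'`. By the moment assumptions,
`E[z_a z_b z_c z_d]` is the Gaussian pairing kernel `δ_ab δ_cd + δ_ac δ_bd + δ_ad δ_bc` plus `Δ` on
the full diagonal. Integrating first over `Z` and then over the independent `Z'` gives the exact
value `3 (tr H)² + 6 ‖H‖² + 3Δ ∑_t G_tt² + 3Δ ∑_a H_aa² + Δ² ∑ A_at⁴`, where `H = A Aᵀ`,
`G = Aᵀ A` and `‖·‖` is the Frobenius norm. Each `Δ`-term is at most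
`‖H‖² = ‖G‖² = tr((WΣ_α W Σ_β)²)`, and `‖H‖² ≤ (tr H)²` by Cauchy–Schwarz.
-/

structure HasStandardMoments {Ω ι : Type*} [MeasurableSpace Ω] (P : Measure Ω)
    (Z : Ω → ι → ℝ) (Δ : ℝ) : Prop where
  memLp : ∀ s, MemLp (fun ω => Z ω s) 4 P
  integral_eq_zero : ∀ s, ∫ ω, Z ω s ∂P = 0
  integral_sq : ∀ s, ∫ ω, Z ω s ^ 2 ∂P = 1
  integral_pow_four : ∀ s, ∫ ω, Z ω s ^ 4 ∂P = 3 + Δ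
  integral_prod_pow : ∀ (r : ℕ) (s : Fin r → ι), Function.Injective s →
    ∀ ς : Fin r → ℕ, (∀ t, 1 ≤ ς t) → ∑ t, ς t ≤ 4 →
      ∫ ω, ∏ t, Z ω (s t) ^ ς t ∂P = ∏ t, ∫ ω, Z ω (s t) ^ ς t ∂P

def fourthMomentKernel {ι : Type*} [DecidableEq ι] (Δ : ℝ) (a b c d : ι) : ℝ :=
  (if a = b ∧ c = d then 1 else 0) + (if a = c ∧ b = d then 1 else 0) +
    (if a = d ∧ b = c then 1 else 0) + if a = b ∧ a = c ∧ a = d then Δ else 0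

theorem sum_fourthMomentKernel_mul {ι : Type*} [Fintype ι] [DecidableEq ι] (Δ : ℝ)
    (f : ι → ι → ι → ι → ℝ) :
    ∑ a, ∑ b, ∑ c, ∑ d, fourthMomentKernel Δ a b c d * f a b c d =
      ∑ a, ∑ b, (f a a b b + f a b a b + f a b b a) + Δ * ∑ a, f a a a a := by
  simp [fourthMomentKernel, add_mul, ite_and, Finset.sum_add_distrib, Finset.mul_sum]

theorem sum_pow_four {ι : Type*} [Fintype ι] (f : ι → ℝ) :
    (∑ a, f a) ^ 4 = ∑ a, ∑ b, ∑ c, ∑ d, f a * f b * f c * f d := by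
  simp only [pow_succ', pow_zero, mul_one, Finset.sum_mul]
  simp only [Finset.mul_sum, mul_assoc]

section Integration

variable {Ω ι : Type*} [MeasurableSpace Ω] {μ : Measure Ω}

theorem MeasureTheory.MemLp.integrable_mul_mul_mul {f g h k : Ω → ℝ} (hf : MemLp f 4 μ)
    (hg : MemLp g 4 μ) (hh : MemLp h 4 μ) (hk : MemLp k 4 μ) :
    Integrable (fun ω => f ω * g ω * h ω * k ω) μ := by
  have := MemLp.prod' (s := Finset.univ) (f := ![f, g, h, k]) (p := fun _ => 4)
    (by intro i _; fin_cases i <;> assumption)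
  rw [← memLp_one_iff_integrable]
  convert this using 1
  · ext ω; simp [Fin.prod_univ_four]
  · simp [ENNReal.mul_inv_cancel]

theorem integral_sum_sum_sum_sum [Fintype ι] {f : ι → ι → ι → ι → Ω → ℝ}
    (hf : ∀ a b c d, Integrable (f a b c d) μ) :
    ∫ ω, ∑ a, ∑ b, ∑ c, ∑ d, f a b c d ω ∂μ = ∑ a, ∑ b, ∑ c, ∑ d, ∫ ω, f a b c d ω ∂μ := by
  have hint : ∀ a b c, Integrable (fun ω => ∑ d, f a b c d ω) μ := fun a b c =>
    integrable_finsetSum _ fun d _ => hf a b c d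
  rw [integral_finsetSum _ fun a _ => integrable_finsetSum _ fun b _ =>
    integrable_finsetSum _ fun c _ => hint a b c]
  refine Finset.sum_congr rfl fun a _ => ?_
  rw [integral_finsetSum _ fun b _ => integrable_finsetSum _ fun c _ => hint a b c]
  refine Finset.sum_congr rfl fun b _ => ?_
  rw [integral_finsetSum _ fun c _ => hint a b c]
  exact Finset.sum_congr rfl fun c _ => integral_finsetSum _ fun d _ => hf a b c d

end Integration

namespace HasStandardMoments

variable {Ω ι : Type*} [MeasurableSpace Ω] {P : Measure Ω} {Z : Ω → ι → ℝ} {Δ : ℝ}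
  (hZ : HasStandardMoments P Z Δ) {x y z w : ι}
include hZ

theorem integral_pow_three_mul (hxy : x ≠ y) : ∫ ω, Z ω x ^ 3 * Z ω y ∂P = 0 := by
  have := hZ.integral_prod_pow 2 ![x, y]
    (by intro i j; fin_cases i <;> fin_cases j <;> simp [*, Ne.symm]) ![3, 1] (by decide) (by decide)
  simpa [Fin.prod_univ_two, hZ.integral_eq_zero y] using this

theorem integral_sq_mul_sq (hxy : x ≠ y) : ∫ ω, Z ω x ^ 2 * Z ω y ^ 2 ∂P = 1 := by
  have := hZ.integral_prod_pow 2 ![x, y]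
    (by intro i j; fin_cases i <;> fin_cases j <;> simp [*, Ne.symm]) ![2, 2] (by decide) (by decide)
  simpa [Fin.prod_univ_two, hZ.integral_sq] using this

theorem integral_sq_mul_mul (hxy : x ≠ y) (hxz : x ≠ z) (hyz : y ≠ z) :
    ∫ ω, Z ω x ^ 2 * Z ω y * Z ω z ∂P = 0 := by
  have := hZ.integral_prod_pow 3 ![x, y, z]
    (by intro i j; fin_cases i <;> fin_cases j <;> simp [*, Ne.symm]) ![2, 1, 1] (by decide)
    (by decide)
  simpa [Fin.prod_univ_three, hZ.integral_eq_zero y, mul_assoc] using this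

theorem integral_mul_mul_mul_of_pairwise_ne (hxy : x ≠ y) (hxz : x ≠ z) (hxw : x ≠ w)
    (hyz : y ≠ z) (hyw : y ≠ w) (hzw : z ≠ w) :
    ∫ ω, Z ω x * Z ω y * Z ω z * Z ω w ∂P = 0 := by
  have := hZ.integral_prod_pow 4 ![x, y, z, w]
    (by intro i j; fin_cases i <;> fin_cases j <;> simp [*, Ne.symm]) ![1, 1, 1, 1] (by decide)
    (by decide)
  simpa [Fin.prod_univ_four, hZ.integral_eq_zero x, mul_assoc] using this

theorem integral_mul_mul_mul [DecidableEq ι] (a b c d : ι) :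
    ∫ ω, Z ω a * Z ω b * Z ω c * Z ω d ∂P = fourthMomentKernel Δ a b c d := by
  rcases eq_or_ne a b with rfl | hab
  · rcases eq_or_ne a c with rfl | hac
    · rcases eq_or_ne a d with rfl | had
      · convert hZ.integral_pow_four a using 1
        · ring_nf
        · simp [fourthMomentKernel]; ring
      · simpa [fourthMomentKernel, had, pow_succ, mul_assoc] using hZ.integral_pow_three_mul had
    · rcases eq_or_ne a d with rfl | had
      · simpa [fourthMomentKernel, hac, hac.symm, pow_succ, mul_assoc, mul_comm, mul_left_comm]
          using hZ.integral_pow_three_mul hac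
      · rcases eq_or_ne c d with rfl | hcd
        · simpa [fourthMomentKernel, hac, pow_succ, mul_assoc] using hZ.integral_sq_mul_sq hac
        · simpa [fourthMomentKernel, hac, had, hcd, pow_succ, mul_assoc]
            using hZ.integral_sq_mul_mul hac had hcd
  · rcases eq_or_ne a c with rfl | hac
    · rcases eq_or_ne a d with rfl | had
      · simpa [fourthMomentKernel, hab, hab.symm, pow_succ, mul_assoc, mul_comm, mul_left_comm]
          using hZ.integral_pow_three_mul hab
      · rcases eq_or_ne b d with rfl | hbd
        · simpa [fourthMomentKernel, hab, hab.symm, pow_succ, mul_assoc, mul_comm, mul_left_comm]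
            using hZ.integral_sq_mul_sq hab
        · simpa [fourthMomentKernel, hab, hab.symm, had, had.symm, hbd, pow_succ, mul_assoc,
            mul_comm, mul_left_comm] using hZ.integral_sq_mul_mul hab had hbd
    · rcases eq_or_ne a d with rfl | had
      · rcases eq_or_ne b c with rfl | hbc
        · simpa [fourthMomentKernel, hab, hab.symm, pow_succ, mul_assoc, mul_comm, mul_left_comm]
            using hZ.integral_sq_mul_sq hab
        · simpa [fourthMomentKernel, hab, hab.symm, hac, hac.symm, hbc, pow_succ, mul_assoc,
            mul_comm, mul_left_comm] using hZ.integral_sq_mul_mul hab hac hbc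
      · rcases eq_or_ne b c with rfl | hbc
        · rcases eq_or_ne b d with rfl | hbd
          · simpa [fourthMomentKernel, hab, hab.symm, pow_succ, mul_assoc, mul_comm, mul_left_comm]
              using hZ.integral_pow_three_mul hab.symm
          · simpa [fourthMomentKernel, hab, hab.symm, had, hbd, pow_succ, mul_assoc, mul_comm,
              mul_left_comm] using hZ.integral_sq_mul_mul hab.symm hbd had
        · rcases eq_or_ne b d with rfl | hbd
          · simpa [fourthMomentKernel, hab, hab.symm, hac, hbc, hbc.symm, pow_succ, mul_assoc,
              mul_comm, mul_left_comm] using hZ.integral_sq_mul_mul hab.symm hbc hac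
          · rcases eq_or_ne c d with rfl | hcd
            · simpa [fourthMomentKernel, hab, hac, hbc, pow_succ, mul_assoc, mul_comm, mul_left_comm]
                using hZ.integral_sq_mul_mul hac.symm hbc.symm hab
            · simpa [fourthMomentKernel, hab, hac, had, hbc, hbd, hcd]
                using hZ.integral_mul_mul_mul_of_pairwise_ne hab hac had hbc hbd hcd

theorem integrable_mul_mul_mul (a b c d : ι) :
    Integrable (fun ω => Z ω a * Z ω b * Z ω c * Z ω d) P :=
  (hZ.memLp a).integrable_mul_mul_mul (hZ.memLp b) (hZ.memLp c) (hZ.memLp d)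

theorem memLp_dotProduct [Fintype ι] (u : ι → ℝ) : MemLp (fun ω => u ⬝ᵥ Z ω) 4 P :=
  memLp_finsetSum _ fun s _ => (hZ.memLp s).const_mul (u s)

theorem integral_dotProduct_mul_mul_mul [Fintype ι] (u v w x : ι → ℝ) :
    ∫ ω, (u ⬝ᵥ Z ω) * (v ⬝ᵥ Z ω) * (w ⬝ᵥ Z ω) * (x ⬝ᵥ Z ω) ∂P =
      (u ⬝ᵥ v) * (w ⬝ᵥ x) + (u ⬝ᵥ w) * (v ⬝ᵥ x) + (u ⬝ᵥ x) * (v ⬝ᵥ w) +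
        Δ * ∑ s, u s * v s * w s * x s := by
  classical
  have expand : ∀ ω, (u ⬝ᵥ Z ω) * (v ⬝ᵥ Z ω) * (w ⬝ᵥ Z ω) * (x ⬝ᵥ Z ω) =
      ∑ a, ∑ b, ∑ c, ∑ d, u a * v b * w c * x d * (Z ω a * Z ω b * Z ω c * Z ω d) := by
    intro ω
    simp only [dotProduct, Finset.sum_mul]
    simp only [Finset.mul_sum, mul_comm, mul_left_comm]
  simp_rw [expand]
  rw [integral_sum_sum_sum_sum fun a b c d => (hZ.integrable_mul_mul_mul a b c d).const_mul _]
  simp only [integral_const_mul, hZ.integral_mul_mul_mul,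
    mul_comm _ (fourthMomentKernel _ _ _ _ _), sum_fourthMomentKernel_mul]
  simp only [dotProduct, Finset.sum_mul_sum, Finset.sum_add_distrib, mul_comm, mul_left_comm]

theorem integral_dotProduct_pow_four_of_indepFun [Fintype ι] {Y : Ω → ι → ℝ}
    (hY : ∀ a, MemLp (fun ω => Y ω a) 4 P) (hind : IndepFun Z Y P) :
    ∫ ω, (Z ω ⬝ᵥ Y ω) ^ 4 ∂P =
      ∑ a, ∑ b, (∫ ω, Y ω a * Y ω a * Y ω b * Y ω b ∂P + ∫ ω, Y ω a * Y ω b * Y ω a * Y ω b ∂P +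
          ∫ ω, Y ω a * Y ω b * Y ω b * Y ω a ∂P) +
        Δ * ∑ a, ∫ ω, Y ω a * Y ω a * Y ω a * Y ω a ∂P := by
  classical
  have hYint : ∀ a b c d, Integrable (fun ω => Y ω a * Y ω b * Y ω c * Y ω d) P :=
    fun a b c d => (hY a).integrable_mul_mul_mul (hY b) (hY c) (hY d)
  have hindep : ∀ a b c d, IndepFun (fun ω => Z ω a * Z ω b * Z ω c * Z ω d)
      (fun ω => Y ω a * Y ω b * Y ω c * Y ω d) P := fun a b c d =>
    hind.comp (φ := fun z : ι → ℝ => z a * z b * z c * z d)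
      (ψ := fun y : ι → ℝ => y a * y b * y c * y d) (by fun_prop) (by fun_prop)
  have expand : ∀ ω, (Z ω ⬝ᵥ Y ω) ^ 4 = ∑ a, ∑ b, ∑ c, ∑ d,
      (Z ω a * Z ω b * Z ω c * Z ω d) * (Y ω a * Y ω b * Y ω c * Y ω d) := by
    intro ω
    rw [dotProduct, sum_pow_four]
    simp only [mul_comm, mul_left_comm]
  simp_rw [expand]
  rw [integral_sum_sum_sum_sum]
  · simp only [fun a b c d => (hindep a b c d).integral_fun_mul_eq_mul_integral
      (hZ.integrable_mul_mul_mul a b c d).aestronglyMeasurable (hYint a b c d).aestronglyMeasurable,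
      hZ.integral_mul_mul_mul, sum_fourthMomentKernel_mul]
  · exact fun a b c d =>
      (hindep a b c d).integrable_mul (hZ.integrable_mul_mul_mul a b c d) (hYint a b c d)

end HasStandardMoments

namespace Matrix

variable {ι κ : Type*} [Fintype ι] [Fintype κ]

theorem trace_mul_mul_self_comm {R : Type*} [CommSemiring R] (X : Matrix ι κ R)
    (Y : Matrix κ ι R) : trace (X * Y * (X * Y)) = trace (Y * X * (Y * X)) := by
  rw [Matrix.mul_assoc, trace_mul_comm, Matrix.mul_assoc, Matrix.mul_assoc, Matrix.mul_assoc]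

theorem sum_sq_eq_trace_mul_transpose (M : Matrix ι κ ℝ) :
    ∑ a, ∑ t, M a t ^ 2 = trace (M * Mᵀ) := by
  simp [trace, mul_apply, sq]

theorem sum_diag_sq_le_sum_sq (M : Matrix ι ι ℝ) : ∑ a, M a a ^ 2 ≤ ∑ a, ∑ b, M a b ^ 2 :=
  Finset.sum_le_sum fun a _ =>
    Finset.single_le_sum (f := fun b => M a b ^ 2) (fun _ _ => sq_nonneg _) (Finset.mem_univ a)

theorem sum_sq_transpose_mul_self (A : Matrix ι κ ℝ) :
    ∑ t, ∑ u, (Aᵀ * A) t u ^ 2 = ∑ a, ∑ b, (A * Aᵀ) a b ^ 2 := by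
  simp only [sum_sq_eq_trace_mul_transpose, transpose_mul, transpose_transpose]
  exact trace_mul_mul_self_comm Aᵀ A

theorem sum_sq_mul_transpose_self_le_sq_trace (A : Matrix ι κ ℝ) :
    ∑ a, ∑ b, (A * Aᵀ) a b ^ 2 ≤ trace (A * Aᵀ) ^ 2 := by
  have hdiag : ∀ a, (A * Aᵀ) a a = ∑ t, A a t ^ 2 := fun a => by simp [mul_apply, sq]
  calc ∑ a, ∑ b, (A * Aᵀ) a b ^ 2 ≤ ∑ a, ∑ b, (A * Aᵀ) a a * (A * Aᵀ) b b :=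
        Finset.sum_le_sum fun a _ => Finset.sum_le_sum fun b _ => by
          simpa only [hdiag, mul_apply, transpose_apply] using
            Finset.sum_mul_sq_le_sq_mul_sq Finset.univ (A a) (A b)
    _ = trace (A * Aᵀ) ^ 2 := by rw [sq, trace, Finset.sum_mul_sum]; rfl

theorem sum_pow_four_le_sum_diag_sq (A : Matrix ι κ ℝ) :
    ∑ a, ∑ t, A a t ^ 4 ≤ ∑ a, (A * Aᵀ) a a ^ 2 :=
  Finset.sum_le_sum fun a _ => by
    simpa [mul_apply, ← sq, ← pow_mul] using
      Finset.sum_sq_le_sq_sum_of_nonneg (s := Finset.univ) fun t _ => sq_nonneg (A a t)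

end Matrix

section BilinearForm

variable {ι κ : Type*} [Fintype ι] [Fintype κ]

def bilinearFourthMoment (Δ : ℝ) (A : Matrix ι κ ℝ) : ℝ :=
  3 * trace (A * Aᵀ) ^ 2 + 6 * ∑ a, ∑ b, (A * Aᵀ) a b ^ 2 +
    3 * Δ * ∑ t, (Aᵀ * A) t t ^ 2 + 3 * Δ * ∑ a, (A * Aᵀ) a a ^ 2 + Δ ^ 2 * ∑ a, ∑ t, A a t ^ 4

theorem integral_dotProduct_mulVec_pow_four {Ω : Type*} [MeasurableSpace Ω] {P : Measure Ω}
    {Δ : ℝ} {Z : Ω → ι → ℝ} {Z' : Ω → κ → ℝ} (hZ : HasStandardMoments P Z Δ)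
    (hZ' : HasStandardMoments P Z' Δ) (hind : IndepFun Z Z' P) (A : Matrix ι κ ℝ) :
    ∫ ω, (Z ω ⬝ᵥ A *ᵥ Z' ω) ^ 4 ∂P = bilinearFourthMoment Δ A := by
  have hind' : IndepFun Z (fun ω => A *ᵥ Z' ω) P :=
    hind.comp (φ := id) (ψ := (A *ᵥ ·)) measurable_id (by fun_prop)
  rw [bilinearFourthMoment, hZ.integral_dotProduct_pow_four_of_indepFun
    (Y := fun ω => A *ᵥ Z' ω) (fun a => hZ'.memLp_dotProduct (A a)) hind']
  simp only [mulVec_apply, hZ'.integral_dotProduct_mul_mul_mul]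
  have htr : trace (A * Aᵀ) ^ 2 = ∑ a, ∑ b, (A.row a ⬝ᵥ A.row a) * (A.row b ⬝ᵥ A.row b) := by
    rw [sq, trace, Finset.sum_mul_sum]; rfl
  have hG : ∑ t, (Aᵀ * A) t t ^ 2 = ∑ a, ∑ b, ∑ t, A a t * A a t * A b t * A b t := by
    simp only [mul_apply, transpose_apply, sq, Finset.sum_mul_sum, mul_assoc]
    rw [Finset.sum_comm]
    exact Finset.sum_congr rfl fun _ _ => Finset.sum_comm
  have hperm₁ : ∀ a b, ∑ t, A a t * A b t * A a t * A b t = ∑ t, A a t * A a t * A b t * A b t :=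
    fun a b => Finset.sum_congr rfl fun t _ => by ring
  have hperm₂ : ∀ a b, ∑ t, A a t * A b t * A b t * A a t = ∑ t, A a t * A a t * A b t * A b t :=
    fun a b => Finset.sum_congr rfl fun t _ => by ring
  rw [htr, hG]
  simp only [show ∀ a b, (A * Aᵀ) a b = A.row a ⬝ᵥ A.row b from fun a b => rfl, hperm₁, hperm₂,
    row, sq, show ∀ x : ℝ, x ^ 4 = x * x * x * x from fun x => by ring]
  simp only [dotProduct_comm, Finset.sum_add_distrib, ← Finset.mul_sum]
  ring

theorem bilinearFourthMoment_le {Δ : ℝ} (hΔ : 0 ≤ Δ) (A : Matrix ι κ ℝ) :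
    bilinearFourthMoment Δ A ≤
      (3 + Δ) * trace (A * Aᵀ) ^ 2 + (3 + Δ) * (2 + Δ) * trace (A * Aᵀ * (A * Aᵀ)) := by
  have hS : trace (A * Aᵀ * (A * Aᵀ)) = ∑ a, ∑ b, (A * Aᵀ) a b ^ 2 := by
    rw [sum_sq_eq_trace_mul_transpose, transpose_mul, transpose_transpose]
  have hT := sum_sq_mul_transpose_self_le_sq_trace A
  have hG := (sum_diag_sq_le_sum_sq (Aᵀ * A)).trans_eq (sum_sq_transpose_mul_self A)
  have hH := sum_diag_sq_le_sum_sq (A * Aᵀ)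
  have hF := (sum_pow_four_le_sum_diag_sq A).trans hH
  rw [bilinearFourthMoment, hS]
  -- with `S = ∑ H_ab²` the gap is
  -- `Δ ((tr H)² - S) + 3Δ (S - ∑ G_tt²) + 3Δ (S - ∑ H_aa²) + Δ² (S - ∑ A_at⁴)`
  nlinarith [mul_nonneg hΔ (sub_nonneg.2 hT), mul_nonneg hΔ (sub_nonneg.2 hG),
    mul_nonneg hΔ (sub_nonneg.2 hH), mul_nonneg (mul_nonneg hΔ hΔ) (sub_nonneg.2 hF)]

end BilinearForm

theorem stmt_12_general {Ω : Type*} [MeasurableSpace Ω] (P : Measure Ω)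
    (p m m' : ℕ) (Δ : ℝ) (hΔ : 0 ≤ Δ)
    (Z : Ω → Fin m → ℝ) (Z' : Ω → Fin m' → ℝ)
    (hZZ'indep : IndepFun Z Z' P)
    (hL4 : ∀ s, MemLp (fun ω => Z ω s) 4 P)
    (hmean : ∀ s, (∫ ω, Z ω s ∂P) = 0)
    (hvar : ∀ s, (∫ ω, (Z ω s) ^ 2 ∂P) = 1)
    (hkurt : ∀ s, (∫ ω, (Z ω s) ^ 4 ∂P) = 3 + Δ)
    (hfac : ∀ (r : ℕ) (s : Fin r → Fin m), Function.Injective s →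
        ∀ ς : Fin r → ℕ, (∀ t, 1 ≤ ς t) → (∑ t, ς t) ≤ 4 →
        (∫ ω, ∏ t, (Z ω (s t)) ^ (ς t) ∂P) = ∏ t, ∫ ω, (Z ω (s t)) ^ (ς t) ∂P)
    (hL4' : ∀ s, MemLp (fun ω => Z' ω s) 4 P)
    (hmean' : ∀ s, (∫ ω, Z' ω s ∂P) = 0)
    (hvar' : ∀ s, (∫ ω, (Z' ω s) ^ 2 ∂P) = 1)
    (hkurt' : ∀ s, (∫ ω, (Z' ω s) ^ 4 ∂P) = 3 + Δ)
    (hfac' : ∀ (r : ℕ) (s : Fin r → Fin m'), Function.Injective s →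
        ∀ ς : Fin r → ℕ, (∀ t, 1 ≤ ς t) → (∑ t, ς t) ≤ 4 →
        (∫ ω, ∏ t, (Z' ω (s t)) ^ (ς t) ∂P) = ∏ t, ∫ ω, (Z' ω (s t)) ^ (ς t) ∂P)
    (Γa : Matrix (Fin p) (Fin m) ℝ) (Γb : Matrix (Fin p) (Fin m') ℝ)
    (Sa Sb : Matrix (Fin p) (Fin p) ℝ) (hSa : Sa = Γa * Γaᵀ) (hSb : Sb = Γb * Γbᵀ)
    (W : Matrix (Fin p) (Fin p) ℝ) (hW : W.PosSemidef) :
    (∫ ω, (Γa.mulVec (Z ω) ⬝ᵥ W.mulVec (Γb.mulVec (Z' ω))) ^ 4 ∂P) ≤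
      (3 + Δ) * (Matrix.trace (W * Sa * W * Sb)) ^ 2 +
        (3 + Δ) * (2 + Δ) * Matrix.trace (W * Sa * W * Sb * (W * Sa * W * Sb)) := by
  have hWt : Wᵀ = W := by simpa using hW.1.eq
  set A := Γaᵀ * W * Γb
  have hform : ∀ ω, Γa *ᵥ Z ω ⬝ᵥ W *ᵥ (Γb *ᵥ Z' ω) = Z ω ⬝ᵥ A *ᵥ Z' ω := fun ω => by
    rw [mulVec_mulVec, dotProduct_mulVec, ← vecMul_transpose, vecMul_vecMul, dotProduct_mulVec,
      ← Matrix.mul_assoc]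
  have hsplit : W * Sa * W * Sb = W * Γa * (A * Γbᵀ) := by
    simp only [hSa, hSb, A, Matrix.mul_assoc]
  have hcycle : A * Γbᵀ * (W * Γa) = A * Aᵀ := by
    simp only [A, transpose_mul, transpose_transpose, hWt, Matrix.mul_assoc]
  simp only [hform, integral_dotProduct_mulVec_pow_four ⟨hL4, hmean, hvar, hkurt, hfac⟩
    ⟨hL4', hmean', hvar', hkurt', hfac'⟩ hZZ'indep A]
  rw [hsplit, trace_mul_comm, hcycle, trace_mul_mul_self_comm, hcycle]
  exact bilinearFourthMoment_le hΔ A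

/-- **Lemma 2.3 (with `Δ ≥ 0`).** For independent factor-model vectors `X = Γ_α Z` and
`X' = Γ_β Z'` and a symmetric positive semidefinite `W`,
`E[(Xᵀ W X')⁴] ≤ (3+Δ)(tr(WΣ_α W Σ_β))² + (3+Δ)(2+Δ) tr((WΣ_α W Σ_β)²)`. -/
theorem stmt_12 {Ω : Type*} [MeasurableSpace Ω] (P : Measure Ω) [IsProbabilityMeasure P]
    (p m m' : ℕ) (Δ : ℝ) (hΔ : 0 ≤ Δ)
    (Z : Ω → Fin m → ℝ) (Z' : Ω → Fin m' → ℝ)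
    (hmeas : Measurable Z) (hmeas' : Measurable Z')
    (hZZ'indep : IndepFun Z Z' P)
    (hL4 : ∀ s, MemLp (fun ω => Z ω s) 4 P)
    (hmean : ∀ s, (∫ ω, Z ω s ∂P) = 0)
    (hvar : ∀ s, (∫ ω, (Z ω s) ^ 2 ∂P) = 1)
    (hkurt : ∀ s, (∫ ω, (Z ω s) ^ 4 ∂P) = 3 + Δ)
    (hfac : ∀ (r : ℕ) (s : Fin r → Fin m), Function.Injective s →
        ∀ ς : Fin r → ℕ, (∀ t, 1 ≤ ς t) → (∑ t, ς t) ≤ 4 →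
        (∫ ω, ∏ t, (Z ω (s t)) ^ (ς t) ∂P) = ∏ t, ∫ ω, (Z ω (s t)) ^ (ς t) ∂P)
    (hL4' : ∀ s, MemLp (fun ω => Z' ω s) 4 P)
    (hmean' : ∀ s, (∫ ω, Z' ω s ∂P) = 0)
    (hvar' : ∀ s, (∫ ω, (Z' ω s) ^ 2 ∂P) = 1)
    (hkurt' : ∀ s, (∫ ω, (Z' ω s) ^ 4 ∂P) = 3 + Δ)
    (hfac' : ∀ (r : ℕ) (s : Fin r → Fin m'), Function.Injective s →
        ∀ ς : Fin r → ℕ, (∀ t, 1 ≤ ς t) → (∑ t, ς t) ≤ 4 →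
        (∫ ω, ∏ t, (Z' ω (s t)) ^ (ς t) ∂P) = ∏ t, ∫ ω, (Z' ω (s t)) ^ (ς t) ∂P)
    (Γa : Matrix (Fin p) (Fin m) ℝ) (Γb : Matrix (Fin p) (Fin m') ℝ)
    (Sa Sb : Matrix (Fin p) (Fin p) ℝ) (hSa : Sa = Γa * Γaᵀ) (hSb : Sb = Γb * Γbᵀ)
    (W : Matrix (Fin p) (Fin p) ℝ) (hW : W.PosSemidef) :
    (∫ ω, (Γa.mulVec (Z ω) ⬝ᵥ W.mulVec (Γb.mulVec (Z' ω))) ^ 4 ∂P) ≤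
      (3 + Δ) * (Matrix.trace (W * Sa * W * Sb)) ^ 2 +
        (3 + Δ) * (2 + Δ) * Matrix.trace (W * Sa * W * Sb * (W * Sa * W * Sb)) :=
  stmt_12_general P p m m' Δ hΔ Z Z' hZZ'indep hL4 hmean hvar hkurt hfac hL4' hmean' hvar' hkurt'
    hfac' Γa Γb Sa Sb hSa hSb W hW
end

section
/- U-statistic representation (A.7) of the trace estimator: for any n ≥ 4, any vectors y_1,…,y_n ∈ ℝ^p and any symmetric positive semidefinite real p×p matrix W, (n−1)/(n(n−2)(n−3)) · ( (n−1)(n−2) tr((W Σ̂)²) + (tr(W Σ̂))² − n Q ) = (n(n−1))^{-1} Σ_{i≠j} (y_iᵀ W y_j)² − 2 (n(n−1)(n−2))^{-1} Σ_{(i,j,k) distinct} y_iᵀ W y_j · y_jᵀ W y_k + (n(n−1)(n−2)(n−3))^{-1} Σ_{(i,j,k,l) distinct} y_iᵀ W y_j · y_kᵀ W y_l, where ȳ = n^{-1} Σ_i y_i, Σ̂ = (n−1)^{-1} Σ_i (y_i−ȳ)(y_i−ȳ)ᵀ and Q = (n−1)^{-1} Σ_i ((y_i−ȳ)ᵀ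 W (y_i−ȳ))². -/
open Matrix Finset

private lemma filterne1 {n : ℕ} (i : Fin n) (g : Fin n → ℝ) :
    ∑ j ∈ Finset.univ.filter (fun j => j ≠ i), g j = (∑ j, g j) - g i := by
  rw [Finset.filter_ne', Finset.sum_erase_eq_sub (Finset.mem_univ i)]

private lemma filterne2 {n : ℕ} (i j : Fin n) (hij : j ≠ i) (g : Fin n → ℝ) :
    ∑ k ∈ Finset.univ.filter (fun k => k ≠ i ∧ k ≠ j), g k = (∑ k, g k) - g i - g j := by
  have h : Finset.univ.filter (fun k => k ≠ i ∧ k ≠ j) = (Finset.univ.erase i).erase j := by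
    ext k; simp [and_comm]
  rw [h, Finset.sum_erase_eq_sub (by simp [hij]),
    Finset.sum_erase_eq_sub (Finset.mem_univ i)]

private lemma filterne3 {n : ℕ} (i j k : Fin n) (hji : j ≠ i) (hki : k ≠ i) (hkj : k ≠ j)
    (g : Fin n → ℝ) :
    ∑ l ∈ Finset.univ.filter (fun l => l ≠ i ∧ l ≠ j ∧ l ≠ k), g l
      = (∑ l, g l) - g i - g j - g k := by
  have h : Finset.univ.filter (fun l => l ≠ i ∧ l ≠ j ∧ l ≠ k)
      = ((Finset.univ.erase i).erase j).erase k := by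
    ext l; simp; tauto
  rw [h, Finset.sum_erase_eq_sub (by simp [hki, hkj]),
    Finset.sum_erase_eq_sub (by simp [hji]),
    Finset.sum_erase_eq_sub (Finset.mem_univ i)]

private lemma core (n : ℕ) (hn : 4 ≤ n) (f b : Fin n → Fin n → ℝ)
    (hsym : ∀ i j, f i j = f j i)
    (hb : ∀ i j, b i j = f i j - (n:ℝ)⁻¹ * (∑ k, f i k) - (n:ℝ)⁻¹ * (∑ k, f k j)
      + (n:ℝ)⁻¹ * ((n:ℝ)⁻¹ * (∑ k, ∑ l, f k l))) :
    ((n : ℝ) - 1) / ((n : ℝ) * ((n : ℝ) - 2) * ((n : ℝ) - 3)) *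
        (((n : ℝ) - 1) * ((n : ℝ) - 2) *
            (((n:ℝ)-1)⁻¹ * (((n:ℝ)-1)⁻¹ * ∑ i, ∑ j, b i j * b j i)) +
          (((n:ℝ)-1)⁻¹ * ∑ i, b i i) ^ 2 -
          (n : ℝ) * (((n:ℝ)-1)⁻¹ * ∑ i, (b i i)^2)) =
      ((n : ℝ) * ((n : ℝ) - 1))⁻¹ *
          (∑ i, ∑ j ∈ Finset.univ.filter (fun j => j ≠ i), (f i j)^2) -
        2 * ((n : ℝ) * ((n : ℝ) - 1) * ((n : ℝ) - 2))⁻¹ *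
          (∑ i, ∑ j ∈ Finset.univ.filter (fun j => j ≠ i),
            ∑ k ∈ Finset.univ.filter (fun k => k ≠ i ∧ k ≠ j), f i j * f j k) +
        ((n : ℝ) * ((n : ℝ) - 1) * ((n : ℝ) - 2) * ((n : ℝ) - 3))⁻¹ *
          (∑ i, ∑ j ∈ Finset.univ.filter (fun j => j ≠ i),
            ∑ k ∈ Finset.univ.filter (fun k => k ≠ i ∧ k ≠ j),
              ∑ l ∈ Finset.univ.filter (fun l => l ≠ i ∧ l ≠ j ∧ l ≠ k),
                f i j * f k l) := by
  have h4 : (4:ℝ) ≤ (n:ℝ) := by exact_mod_cast hn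
  have hn0 : (n:ℝ) ≠ 0 := by linarith
  have hn1 : (n:ℝ) - 1 ≠ 0 := by intro h; nlinarith [h]
  have hn2 : (n:ℝ) - 2 ≠ 0 := by intro h; nlinarith [h]
  have hn3 : (n:ℝ) - 3 ≠ 0 := by intro h; nlinarith [h]
  have hcol : ∀ j : Fin n, (∑ i, f i j) = ∑ k, f j k :=
    fun j => Finset.sum_congr rfl fun i _ => hsym i j
  have hb' : ∀ i j, b i j = f i j - (n:ℝ)⁻¹ * (∑ k, f i k) - (n:ℝ)⁻¹ * (∑ k, f j k)
      + (n:ℝ)⁻¹ * ((n:ℝ)⁻¹ * (∑ k, ∑ l, f k l)) := fun i j => by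
    rw [hb i j, hcol j]
  -- aggregate helper sums
  have hU : (∑ i, ∑ j, f i j * (∑ k, f j k)) = ∑ i, (∑ j, f i j)^2 := by
    rw [Finset.sum_comm]
    refine Finset.sum_congr rfl fun j _ => ?_
    rw [← Finset.sum_mul, hcol j, ← pow_two]
  have hV : (∑ i, ∑ j, f i j * f j i) = ∑ i, ∑ j, (f i j)^2 :=
    Finset.sum_congr rfl fun i _ => Finset.sum_congr rfl fun j _ => by
      rw [hsym j i, ← pow_two]
  have hW : (∑ i, ∑ j, f i j * f j j) = ∑ i, f i i * (∑ j, f i j) := by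
    rw [Finset.sum_comm]
    refine Finset.sum_congr rfl fun j _ => ?_
    rw [← Finset.sum_mul, hcol j]; ring
  -- B1
  have B1 : ∑ i, b i i = (∑ i, f i i) - 2*((n:ℝ)⁻¹*(∑ i, ∑ j, f i j))
      + (n:ℝ)*((n:ℝ)⁻¹*((n:ℝ)⁻¹*(∑ k, ∑ l, f k l))) := by
    calc ∑ i, b i i = ∑ i, (f i i - (n:ℝ)⁻¹ * (∑ k, f i k) - (n:ℝ)⁻¹ * (∑ k, f i k)
        + (n:ℝ)⁻¹ * ((n:ℝ)⁻¹ * (∑ k, ∑ l, f k l))) :=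
          Finset.sum_congr rfl fun i _ => hb' i i
      _ = _ := by
        simp only [Finset.sum_add_distrib, Finset.sum_sub_distrib, ← Finset.mul_sum,
          Finset.sum_const, Finset.card_univ, Fintype.card_fin, nsmul_eq_mul]
        ring
  -- B3
  have B3 : ∑ i, (b i i)^2 = (∑ i, (f i i)^2)
      + (4*((n:ℝ)⁻¹*(n:ℝ)⁻¹))*(∑ i, (∑ j, f i j)^2)
      + (n:ℝ)*((n:ℝ)⁻¹*(n:ℝ)⁻¹*(n:ℝ)⁻¹*(n:ℝ)⁻¹*((∑ k, ∑ l, f k l)^2))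
      - (4*(n:ℝ)⁻¹)*(∑ i, f i i * (∑ j, f i j))
      + (2*((n:ℝ)⁻¹*(n:ℝ)⁻¹)*(∑ k, ∑ l, f k l))*(∑ i, f i i)
      - (4*((n:ℝ)⁻¹*(n:ℝ)⁻¹*(n:ℝ)⁻¹)*(∑ k, ∑ l, f k l))*(∑ k, ∑ l, f k l) := by
    calc ∑ i, (b i i)^2 = ∑ i, ((f i i)^2 + (4*((n:ℝ)⁻¹*(n:ℝ)⁻¹))*((∑ k, f i k)^2)
        + (n:ℝ)⁻¹*(n:ℝ)⁻¹*(n:ℝ)⁻¹*(n:ℝ)⁻¹*((∑ k, ∑ l, f k l)^2)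
        - (4*(n:ℝ)⁻¹)*(f i i * (∑ k, f i k))
        + (2*((n:ℝ)⁻¹*(n:ℝ)⁻¹)*(∑ k, ∑ l, f k l))*(f i i)
        - (4*((n:ℝ)⁻¹*(n:ℝ)⁻¹*(n:ℝ)⁻¹)*(∑ k, ∑ l, f k l))*(∑ k, f i k)) :=
          Finset.sum_congr rfl fun i _ => by rw [hb' i i]; ring
      _ = _ := by
        simp only [Finset.sum_add_distrib, Finset.sum_sub_distrib, ← Finset.mul_sum,
          Finset.sum_const, Finset.card_univ, Fintype.card_fin, nsmul_eq_mul]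
        ring
  -- B2 inner
  have inner2 : ∀ i, ∑ j, b i j * b j i = (∑ j, (f i j)^2)
      + (n:ℝ)*((n:ℝ)⁻¹*(n:ℝ)⁻¹*((∑ k, f i k)^2))
      + (n:ℝ)⁻¹*(n:ℝ)⁻¹*(∑ j, (∑ k, f j k)^2)
      + (n:ℝ)*((n:ℝ)⁻¹*(n:ℝ)⁻¹*(n:ℝ)⁻¹*(n:ℝ)⁻¹*((∑ k, ∑ l, f k l)^2))
      - 2*(n:ℝ)⁻¹*((∑ k, f i k)^2)
      - 2*(n:ℝ)⁻¹*(∑ j, f i j * (∑ k, f j k))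
      + 4*((n:ℝ)⁻¹*(n:ℝ)⁻¹)*(∑ k, ∑ l, f k l)*(∑ k, f i k)
      - 2*(n:ℝ)*((n:ℝ)⁻¹*(n:ℝ)⁻¹*(n:ℝ)⁻¹)*(∑ k, ∑ l, f k l)*(∑ k, f i k)
      - 2*((n:ℝ)⁻¹*(n:ℝ)⁻¹*(n:ℝ)⁻¹)*((∑ k, ∑ l, f k l)^2) := by
    intro i
    calc ∑ j, b i j * b j i = ∑ j, ((f i j)^2
        + (n:ℝ)⁻¹*(n:ℝ)⁻¹*((∑ k, f i k)^2)
        + (n:ℝ)⁻¹*(n:ℝ)⁻¹*((∑ k, f j k)^2)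
        + (n:ℝ)⁻¹*(n:ℝ)⁻¹*(n:ℝ)⁻¹*(n:ℝ)⁻¹*((∑ k, ∑ l, f k l)^2)
        - (2*(n:ℝ)⁻¹*(∑ k, f i k))*(f i j)
        - (2*(n:ℝ)⁻¹)*(f i j * (∑ k, f j k))
        + (2*((n:ℝ)⁻¹*(n:ℝ)⁻¹)*(∑ k, ∑ l, f k l))*(f i j)
        + (2*((n:ℝ)⁻¹*(n:ℝ)⁻¹)*(∑ k, f i k))*(∑ k, f j k)
        - (2*((n:ℝ)⁻¹*(n:ℝ)⁻¹*(n:ℝ)⁻¹)*(∑ k, ∑ l, f k l))*(∑ k, f i k)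
        - (2*((n:ℝ)⁻¹*(n:ℝ)⁻¹*(n:ℝ)⁻¹)*(∑ k, ∑ l, f k l))*(∑ k, f j k)) :=
          Finset.sum_congr rfl fun j _ => by rw [hb' i j, hb' j i, hsym j i]; ring
      _ = _ := by
        simp only [Finset.sum_add_distrib, Finset.sum_sub_distrib, ← Finset.mul_sum,
          ← Finset.sum_mul, Finset.sum_const, Finset.card_univ, Fintype.card_fin, nsmul_eq_mul]
        ring
  -- B2
  have B2 : ∑ i, ∑ j, b i j * b j i = (∑ i, ∑ j, (f i j)^2)
      + 2*(n:ℝ)*((n:ℝ)⁻¹*(n:ℝ)⁻¹)*(∑ i, (∑ j, f i j)^2)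
      + (n:ℝ)*(n:ℝ)*((n:ℝ)⁻¹*(n:ℝ)⁻¹*(n:ℝ)⁻¹*(n:ℝ)⁻¹)*((∑ k, ∑ l, f k l)^2)
      - 4*(n:ℝ)⁻¹*(∑ i, (∑ j, f i j)^2)
      + 4*((n:ℝ)⁻¹*(n:ℝ)⁻¹)*((∑ k, ∑ l, f k l)^2)
      - 4*(n:ℝ)*((n:ℝ)⁻¹*(n:ℝ)⁻¹*(n:ℝ)⁻¹)*((∑ k, ∑ l, f k l)^2) := by
    calc ∑ i, ∑ j, b i j * b j i = ∑ i, ((∑ j, (f i j)^2)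
        + (n:ℝ)*((n:ℝ)⁻¹*(n:ℝ)⁻¹*((∑ k, f i k)^2))
        + (n:ℝ)⁻¹*(n:ℝ)⁻¹*(∑ j, (∑ k, f j k)^2)
        + (n:ℝ)*((n:ℝ)⁻¹*(n:ℝ)⁻¹*(n:ℝ)⁻¹*(n:ℝ)⁻¹*((∑ k, ∑ l, f k l)^2))
        - 2*(n:ℝ)⁻¹*((∑ k, f i k)^2)
        - 2*(n:ℝ)⁻¹*(∑ j, f i j * (∑ k, f j k))
        + 4*((n:ℝ)⁻¹*(n:ℝ)⁻¹)*(∑ k, ∑ l, f k l)*(∑ k, f i k)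
        - 2*(n:ℝ)*((n:ℝ)⁻¹*(n:ℝ)⁻¹*(n:ℝ)⁻¹)*(∑ k, ∑ l, f k l)*(∑ k, f i k)
        - 2*((n:ℝ)⁻¹*(n:ℝ)⁻¹*(n:ℝ)⁻¹)*((∑ k, ∑ l, f k l)^2)) :=
          Finset.sum_congr rfl fun i _ => inner2 i
      _ = _ := by
        simp only [Finset.sum_add_distrib, Finset.sum_sub_distrib, ← Finset.mul_sum,
          ← Finset.sum_mul, Finset.sum_const, Finset.card_univ, Fintype.card_fin, nsmul_eq_mul]
        rw [hU]
        ring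
  -- S2
  have S2 : (∑ i, ∑ j ∈ Finset.univ.filter (fun j => j ≠ i), (f i j)^2)
      = (∑ i, ∑ j, (f i j)^2) - (∑ i, (f i i)^2) := by
    rw [← Finset.sum_sub_distrib]
    exact Finset.sum_congr rfl fun i _ => filterne1 i _
  -- S3
  have S3 : (∑ i, ∑ j ∈ Finset.univ.filter (fun j => j ≠ i),
        ∑ k ∈ Finset.univ.filter (fun k => k ≠ i ∧ k ≠ j), f i j * f j k)
      = (∑ i, (∑ j, f i j)^2) - (∑ i, ∑ j, (f i j)^2)
        - 2*(∑ i, f i i * (∑ j, f i j)) + 2*(∑ i, (f i i)^2) := by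
    have step : ∀ i : Fin n, (∑ j ∈ Finset.univ.filter (fun j => j ≠ i),
          ∑ k ∈ Finset.univ.filter (fun k => k ≠ i ∧ k ≠ j), f i j * f j k)
        = (∑ j, f i j * (∑ k, f j k)) - (∑ j, f i j * f j i) - (∑ j, f i j * f j j)
          - f i i * (∑ j, f i j) + 2*(f i i)^2 := by
      intro i
      calc (∑ j ∈ Finset.univ.filter (fun j => j ≠ i),
            ∑ k ∈ Finset.univ.filter (fun k => k ≠ i ∧ k ≠ j), f i j * f j k)
          = ∑ j ∈ Finset.univ.filter (fun j => j ≠ i),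
              (f i j * (∑ k, f j k) - f i j * f j i - f i j * f j j) := by
            refine Finset.sum_congr rfl fun j hj => ?_
            have hj' : j ≠ i := by simpa using hj
            rw [filterne2 i j hj', ← Finset.mul_sum]
        _ = _ := by
            rw [filterne1]
            simp only [Finset.sum_sub_distrib]
            ring
    calc (∑ i, ∑ j ∈ Finset.univ.filter (fun j => j ≠ i),
          ∑ k ∈ Finset.univ.filter (fun k => k ≠ i ∧ k ≠ j), f i j * f j k)
        = ∑ i, ((∑ j, f i j * (∑ k, f j k)) - (∑ j, f i j * f j i) - (∑ j, f i j * f j j)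
            - f i i * (∑ j, f i j) + 2*(f i i)^2) :=
          Finset.sum_congr rfl fun i _ => step i
      _ = _ := by
        simp only [Finset.sum_add_distrib, Finset.sum_sub_distrib, ← Finset.mul_sum]
        rw [hU, hV, hW]
        ring
  -- S4
  have step4 : ∀ i j : Fin n, j ≠ i →
      (∑ k ∈ Finset.univ.filter (fun k => k ≠ i ∧ k ≠ j),
        ∑ l ∈ Finset.univ.filter (fun l => l ≠ i ∧ l ≠ j ∧ l ≠ k), f i j * f k l)
      = f i j * (∑ k, ∑ l, f k l) - f i j * (∑ k, f k k)
        - 2*(f i j * (∑ k, f i k)) - 2*(f i j * (∑ k, f j k))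
        + 2*(f i j * f i i) + 2*(f i j * f j j) + 2*(f i j)^2 := by
    intro i j hj
    calc (∑ k ∈ Finset.univ.filter (fun k => k ≠ i ∧ k ≠ j),
          ∑ l ∈ Finset.univ.filter (fun l => l ≠ i ∧ l ≠ j ∧ l ≠ k), f i j * f k l)
        = ∑ k ∈ Finset.univ.filter (fun k => k ≠ i ∧ k ≠ j),
            (f i j * (∑ l, f k l) - f i j * f k i - f i j * f k j - f i j * f k k) := by
          refine Finset.sum_congr rfl fun k hk => ?_
          have hk' : k ≠ i ∧ k ≠ j := by simpa using hk
          rw [filterne3 i j k hj hk'.1 hk'.2, ← Finset.mul_sum]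
      _ = _ := by
          rw [filterne2 i j hj]
          simp only [Finset.sum_sub_distrib, ← Finset.mul_sum]
          rw [hcol i, hcol j, hsym j i]
          ring
  have step5 : ∀ i : Fin n, (∑ j ∈ Finset.univ.filter (fun j => j ≠ i),
        ∑ k ∈ Finset.univ.filter (fun k => k ≠ i ∧ k ≠ j),
          ∑ l ∈ Finset.univ.filter (fun l => l ≠ i ∧ l ≠ j ∧ l ≠ k), f i j * f k l)
      = (∑ j, f i j)*(∑ k, ∑ l, f k l) - (∑ j, f i j)*(∑ k, f k k)
        - 2*((∑ j, f i j)^2) - 2*(∑ j, f i j * (∑ k, f j k))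
        + 2*(f i i * (∑ j, f i j)) + 2*(∑ j, f i j * f j j) + 2*(∑ j, (f i j)^2)
        - f i i * (∑ k, ∑ l, f k l) + f i i * (∑ k, f k k)
        + 4*(f i i * (∑ j, f i j)) - 6*(f i i)^2 := by
    intro i
    calc (∑ j ∈ Finset.univ.filter (fun j => j ≠ i),
          ∑ k ∈ Finset.univ.filter (fun k => k ≠ i ∧ k ≠ j),
            ∑ l ∈ Finset.univ.filter (fun l => l ≠ i ∧ l ≠ j ∧ l ≠ k), f i j * f k l)
        = ∑ j ∈ Finset.univ.filter (fun j => j ≠ i),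
            (f i j * (∑ k, ∑ l, f k l) - f i j * (∑ k, f k k)
              - 2*(f i j * (∑ k, f i k)) - 2*(f i j * (∑ k, f j k))
              + 2*(f i j * f i i) + 2*(f i j * f j j) + 2*(f i j)^2) := by
          refine Finset.sum_congr rfl fun j hj => ?_
          exact step4 i j (by simpa using hj)
      _ = _ := by
          rw [filterne1]
          simp only [Finset.sum_add_distrib, Finset.sum_sub_distrib, ← Finset.mul_sum,
            ← Finset.sum_mul]
          ring
  have S4 : (∑ i, ∑ j ∈ Finset.univ.filter (fun j => j ≠ i),
        ∑ k ∈ Finset.univ.filter (fun k => k ≠ i ∧ k ≠ j),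
          ∑ l ∈ Finset.univ.filter (fun l => l ≠ i ∧ l ≠ j ∧ l ≠ k), f i j * f k l)
      = (∑ k, ∑ l, f k l)^2 - 2*(∑ i, f i i)*(∑ k, ∑ l, f k l) + (∑ i, f i i)^2
        - 4*(∑ i, (∑ j, f i j)^2) + 8*(∑ i, f i i * (∑ j, f i j))
        + 2*(∑ i, ∑ j, (f i j)^2) - 6*(∑ i, (f i i)^2) := by
    calc (∑ i, ∑ j ∈ Finset.univ.filter (fun j => j ≠ i),
          ∑ k ∈ Finset.univ.filter (fun k => k ≠ i ∧ k ≠ j),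
            ∑ l ∈ Finset.univ.filter (fun l => l ≠ i ∧ l ≠ j ∧ l ≠ k), f i j * f k l)
        = ∑ i, ((∑ j, f i j)*(∑ k, ∑ l, f k l) - (∑ j, f i j)*(∑ k, f k k)
            - 2*((∑ j, f i j)^2) - 2*(∑ j, f i j * (∑ k, f j k))
            + 2*(f i i * (∑ j, f i j)) + 2*(∑ j, f i j * f j j) + 2*(∑ j, (f i j)^2)
            - f i i * (∑ k, ∑ l, f k l) + f i i * (∑ k, f k k)
            + 4*(f i i * (∑ j, f i j)) - 6*(f i i)^2) :=
          Finset.sum_congr rfl fun i _ => step5 i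
      _ = _ := by
        simp only [Finset.sum_add_distrib, Finset.sum_sub_distrib, ← Finset.mul_sum,
          ← Finset.sum_mul]
        rw [hU, hW]
        ring
  -- final assembly
  rw [B1, B2, B3, S2, S3, S4]
  field_simp
  ring

private lemma mulWvv {p : ℕ} (W : Matrix (Fin p) (Fin p) ℝ) (u v : Fin p → ℝ) :
    W * vecMulVec u v = vecMulVec (W *ᵥ u) v := by
  ext a b
  simp [Matrix.mul_apply, vecMulVec_apply, Matrix.mulVec, dotProduct, Finset.sum_mul, mul_assoc]

private lemma vvmul {p : ℕ} (u v u' v' : Fin p → ℝ) :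
    vecMulVec u v * vecMulVec u' v' = (v ⬝ᵥ u') • vecMulVec u v' := by
  ext a b
  simp only [Matrix.mul_apply, vecMulVec_apply, Matrix.smul_apply, dotProduct,
    Finset.sum_mul, smul_eq_mul]
  exact Finset.sum_congr rfl fun k _ => by ring

private lemma trvv {p : ℕ} (u v : Fin p → ℝ) : Matrix.trace (vecMulVec u v) = u ⬝ᵥ v := by
  simp [Matrix.trace, Matrix.diag, vecMulVec_apply, dotProduct]

private lemma dps {p n : ℕ} (u : Fin p → ℝ) (w : Fin n → Fin p → ℝ) :
    u ⬝ᵥ (∑ i, w i) = ∑ i, u ⬝ᵥ w i := by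
  simp only [dotProduct, Finset.sum_apply, Finset.mul_sum]
  exact Finset.sum_comm

private lemma sdp {p n : ℕ} (v : Fin p → ℝ) (w : Fin n → Fin p → ℝ) :
    (∑ i, w i) ⬝ᵥ v = ∑ i, w i ⬝ᵥ v := by
  simp only [dotProduct, Finset.sum_apply, Finset.sum_mul]
  exact Finset.sum_comm

private lemma mvs {p n : ℕ} (W : Matrix (Fin p) (Fin p) ℝ) (w : Fin n → Fin p → ℝ) :
    W *ᵥ (∑ i, w i) = ∑ i, W *ᵥ w i := by
  ext a
  simp only [Matrix.mulVec, dotProduct, Finset.sum_apply, Finset.mul_sum]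
  exact Finset.sum_comm

/-- **U-statistic representation (A.7) of the trace estimator.** For `n ≥ 4`,
`(n−1)/(n(n−2)(n−3)) · ((n−1)(n−2) tr((WΣ̂)²) + (tr(WΣ̂))² − n Q)` equals
`(n(n−1))⁻¹ Σ_{i≠j} (yᵢᵀWy_j)² − 2(n(n−1)(n−2))⁻¹ Σ_{i,j,k distinct} yᵢᵀWy_j · y_jᵀWy_k
+ (n(n−1)(n−2)(n−3))⁻¹ Σ_{i,j,k,l distinct} yᵢᵀWy_j · y_kᵀWy_l`. -/
theorem stmt_17 (p n : ℕ) (hn : 4 ≤ n)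
    (y : Fin n → Fin p → ℝ)
    (W : Matrix (Fin p) (Fin p) ℝ) (hW : W.PosSemidef)
    (ybar : Fin p → ℝ) (hybar : ybar = (n : ℝ)⁻¹ • ∑ i, y i)
    (Shat : Matrix (Fin p) (Fin p) ℝ)
    (hShat : Shat = ((n : ℝ) - 1)⁻¹ • ∑ i, Matrix.vecMulVec (y i - ybar) (y i - ybar))
    (Q : ℝ)
    (hQ : Q = ((n : ℝ) - 1)⁻¹ * ∑ i, ((y i - ybar) ⬝ᵥ W.mulVec (y i - ybar)) ^ 2) :
    ((n : ℝ) - 1) / ((n : ℝ) * ((n : ℝ) - 2) * ((n : ℝ) - 3)) *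
        (((n : ℝ) - 1) * ((n : ℝ) - 2) * Matrix.trace (W * Shat * (W * Shat)) +
          (Matrix.trace (W * Shat)) ^ 2 - (n : ℝ) * Q) =
      ((n : ℝ) * ((n : ℝ) - 1))⁻¹ *
          (∑ i, ∑ j ∈ Finset.univ.filter (fun j => j ≠ i),
            (y i ⬝ᵥ W.mulVec (y j)) ^ 2) -
        2 * ((n : ℝ) * ((n : ℝ) - 1) * ((n : ℝ) - 2))⁻¹ *
          (∑ i, ∑ j ∈ Finset.univ.filter (fun j => j ≠ i),
            ∑ k ∈ Finset.univ.filter (fun k => k ≠ i ∧ k ≠ j),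
              (y i ⬝ᵥ W.mulVec (y j)) * (y j ⬝ᵥ W.mulVec (y k))) +
        ((n : ℝ) * ((n : ℝ) - 1) * ((n : ℝ) - 2) * ((n : ℝ) - 3))⁻¹ *
          (∑ i, ∑ j ∈ Finset.univ.filter (fun j => j ≠ i),
            ∑ k ∈ Finset.univ.filter (fun k => k ≠ i ∧ k ≠ j),
              ∑ l ∈ Finset.univ.filter (fun l => l ≠ i ∧ l ≠ j ∧ l ≠ k),
                (y i ⬝ᵥ W.mulVec (y j)) * (y k ⬝ᵥ W.mulVec (y l))) := by
  have hWs : ∀ a b, W a b = W b a := by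
    intro a b
    conv_lhs => rw [← hW.1]
    simp [Matrix.conjTranspose_apply]
  have hsym : ∀ i j, y i ⬝ᵥ W *ᵥ y j = y j ⬝ᵥ W *ᵥ y i := by
    intro i j
    simp only [dotProduct, Matrix.mulVec, Finset.mul_sum]
    rw [Finset.sum_comm]
    refine Finset.sum_congr rfl fun a _ => Finset.sum_congr rfl fun b _ => ?_
    rw [hWs b a]
    ring
  have hy1 : ∀ u : Fin p → ℝ, u ⬝ᵥ W *ᵥ ybar = (n:ℝ)⁻¹ * ∑ k, u ⬝ᵥ W *ᵥ y k := by
    intro u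
    rw [hybar, Matrix.mulVec_smul, dotProduct_smul, smul_eq_mul, mvs, dps]
  have hy2 : ∀ v : Fin p → ℝ, ybar ⬝ᵥ W *ᵥ v = (n:ℝ)⁻¹ * ∑ k, y k ⬝ᵥ W *ᵥ v := by
    intro v
    rw [hybar, smul_dotProduct, smul_eq_mul, sdp]
  have hb : ∀ i j, (y i - ybar) ⬝ᵥ W *ᵥ (y j - ybar)
      = (y i ⬝ᵥ W *ᵥ y j) - (n:ℝ)⁻¹*(∑ k, y i ⬝ᵥ W *ᵥ y k)
        - (n:ℝ)⁻¹*(∑ k, y k ⬝ᵥ W *ᵥ y j)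
        + (n:ℝ)⁻¹*((n:ℝ)⁻¹*(∑ k, ∑ l, y k ⬝ᵥ W *ᵥ y l)) := by
    intro i j
    rw [Matrix.mulVec_sub, sub_dotProduct, dotProduct_sub, dotProduct_sub]
    simp only [hy1, hy2, ← Finset.mul_sum]
    rw [show (∑ k, ∑ l, y l ⬝ᵥ W *ᵥ y k : ℝ) = ∑ k, ∑ l, y k ⬝ᵥ W *ᵥ y l from
      Finset.sum_comm]
    ring
  have M1 : Matrix.trace (W * Shat)
      = ((n:ℝ)-1)⁻¹ * ∑ i, (y i - ybar) ⬝ᵥ W *ᵥ (y i - ybar) := by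
    rw [hShat, Matrix.mul_smul, Matrix.trace_smul, smul_eq_mul]
    congr 1
    rw [Finset.mul_sum, Matrix.trace_sum]
    exact Finset.sum_congr rfl fun i _ => by rw [mulWvv, trvv, dotProduct_comm]
  have M2 : Matrix.trace (W * Shat * (W * Shat))
      = ((n:ℝ)-1)⁻¹ * (((n:ℝ)-1)⁻¹ * ∑ i, ∑ j,
          ((y i - ybar) ⬝ᵥ W *ᵥ (y j - ybar)) * ((y j - ybar) ⬝ᵥ W *ᵥ (y i - ybar))) := by
    have hWS : W * Shat
        = ((n:ℝ)-1)⁻¹ • ∑ i, vecMulVec (W *ᵥ (y i - ybar)) (y i - ybar) := by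
      rw [hShat, Matrix.mul_smul]
      congr 1
      rw [Finset.mul_sum]
      exact Finset.sum_congr rfl fun i _ => mulWvv W _ _
    have inner : ∀ i, Matrix.trace (∑ j,
        vecMulVec (W *ᵥ (y i - ybar)) (y i - ybar)
          * vecMulVec (W *ᵥ (y j - ybar)) (y j - ybar))
        = ∑ j, ((y i - ybar) ⬝ᵥ W *ᵥ (y j - ybar)) * ((y j - ybar) ⬝ᵥ W *ᵥ (y i - ybar)) := by
      intro i
      rw [Matrix.trace_sum]
      refine Finset.sum_congr rfl fun j _ => ?_
      rw [vvmul, Matrix.trace_smul, trvv, smul_eq_mul,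
        dotProduct_comm (W *ᵥ (y i - ybar)) (y j - ybar)]
    rw [hWS, smul_mul_smul_comm, Matrix.trace_smul, smul_eq_mul, Finset.sum_mul_sum,
      Matrix.trace_sum]
    rw [Finset.sum_congr rfl fun i _ => inner i]
    ring
  rw [M1, M2, hQ]
  exact core n hn (fun i j => y i ⬝ᵥ W *ᵥ y j)
    (fun i j => (y i - ybar) ⬝ᵥ W *ᵥ (y j - ybar)) hsym hb
end
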